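/- For every integer n ≥ 1, every integer k, and every real x: B_{n,p,q}^{(k)}(x) = Σ_{m=0}^{n} (−1)^{m+n} · m! · S_2(n,m,x) / [m+1]_{p,q}^k. -/

import Mathlib

open Finset

/-- The `(p,q)`-integer `[m]_{p,q} = (p^m - q^m)/(p - q)`. -/
noncomputable def pqInt (p q : ℝ) (m : ℕ) : ℝ := (p ^ m - q ^ m) / (p - q)

/-- The exponential generating function `∑ f n * t^n / n!` of a sequence `f`. -/
noncomputable def egf (f : ℕ → ℝ) : PowerSeries ℝ :=
  PowerSeries.mk fun n => f n / n.factorial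

/-- The power series `∑_{m ≥ 0} (1 - e^{-t})^m / [m+1]_{p,q}^k`
(which equals `Li_{k,p,q}(1 - e^{-t}) / (1 - e^{-t})`).
Since `(1 - e^{-t})^m` has order at least `m`, the `n`-th coefficient only
receives contributions from `m ≤ n`. -/
noncomputable def pqBernSeries (p q : ℝ) (k : ℤ) : PowerSeries ℝ :=
  PowerSeries.mk fun n =>
    ∑ m ∈ Finset.range (n + 1),
      PowerSeries.coeff n ((1 - PowerSeries.rescale (-1) (PowerSeries.exp ℝ)) ^ m) /
        pqInt p q (m + 1) ^ k

/-- Carlitz's weighted Stirling numbers of the second kind. -/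
noncomputable def stirling2W (n m : ℕ) (x : ℝ) : ℝ :=
  (1 / (m.factorial : ℝ)) *
    ∑ j ∈ Finset.range (m + 1), (-1 : ℝ) ^ (m - j) * (m.choose j : ℝ) * (x + j) ^ n

/-!
Only the terms `m ≤ n` of `∑ₘ (1 - e^{-t})^m / [m+1]^k` reach the coefficient of `tⁿ`, so
`B_n(x) / n!` is the finite sum over `m ≤ n` of `[tⁿ] ((1 - e^{-t})^m e^{-xt}) / [m+1]^k`.
Expanding binomially, `(1 - e^{-t})^m e^{-xt} = ∑ⱼ (-1)^j (m choose j) e^{-(x+j)t}`, whose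
`tⁿ`-coefficient is `(-1)^(n+m) m! S₂(n,m,x) / n!`.
-/

open PowerSeries

section

variable {A : Type*} [CommRing A]

theorem coeff_mul_eq_sum_of_coeff_eq_sum_pow {f g φ : A⟦X⟧} (hf : constantCoeff f = 0)
    {w : ℕ → A} (hφ : ∀ n, coeff n φ = ∑ m ∈ range (n + 1), coeff n (f ^ m) * w m) (n : ℕ) :
    coeff n (φ * g) = ∑ m ∈ range (n + 1), coeff n (f ^ m * g) * w m := by
  have hφ_le : ∀ i ≤ n, coeff i φ = coeff i (∑ m ∈ range (n + 1), f ^ m * C (w m)) := by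
    intro i hi
    simp only [hφ, map_sum, coeff_mul_C]
    refine sum_subset (by simpa using hi) fun m _ hm => ?_
    have him : i < m := by simpa using hm
    rw [coeff_of_lt_order i ((Nat.cast_lt.mpr him).trans_le
      (le_order_pow_of_constantCoeff_eq_zero m hf)), zero_mul]
  calc coeff n (φ * g)
      = coeff n ((∑ m ∈ range (n + 1), f ^ m * C (w m)) * g) := by
        simp only [coeff_mul]
        exact sum_congr rfl fun ij hij => by
          rw [hφ_le _ (HasAntidiagonal.antidiagonal.fst_le hij)]
    _ = ∑ m ∈ range (n + 1), coeff n (f ^ m * g) * w m := by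
        simp only [sum_mul, map_sum, mul_right_comm _ (C _), coeff_mul_C]

variable [Algebra ℚ A]

theorem constantCoeff_one_sub_rescale_exp (a : A) : constantCoeff (1 - rescale a (exp A)) = 0 := by
  rw [map_sub, map_one, ← coeff_zero_eq_constantCoeff_apply, coeff_rescale]
  simp

theorem rescale_exp_pow (a : A) (j : ℕ) : rescale a (exp A) ^ j = rescale (j * a) (exp A) := by
  rw [← map_pow, exp_pow_eq_rescale_exp, rescale_rescale, mul_comm]

theorem one_sub_rescale_exp_pow_mul_rescale_exp (a b : A) (m : ℕ) :
    (1 - rescale a (exp A)) ^ m * rescale b (exp A) =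
      ∑ j ∈ range (m + 1), ((-1) ^ j * m.choose j : A) • rescale (j * a + b) (exp A) := by
  rw [sub_eq_neg_add, add_pow, sum_mul]
  refine sum_congr rfl fun j _ => ?_
  rw [neg_pow, one_pow, mul_one, rescale_exp_pow, ← exp_mul_exp_eq_exp_add]
  simp only [Algebra.smul_def, map_mul, map_pow, map_neg, map_one, map_natCast]
  ring

end

theorem neg_one_pow_add_mul_neg_one_pow_sub {j m : ℕ} (n : ℕ) (h : j ≤ m) :
    (-1 : ℝ) ^ (n + m) * (-1) ^ (m - j) = (-1) ^ n * (-1) ^ j := by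
  rw [← pow_add, ← pow_add]
  exact neg_one_pow_congr (by simp only [Nat.even_iff]; omega)

theorem coeff_one_sub_exp_neg_pow_mul_exp_neg (n m : ℕ) (x : ℝ) :
    coeff n ((1 - rescale (-1) (exp ℝ)) ^ m * rescale (-x) (exp ℝ)) =
      (-1) ^ (n + m) * m.factorial * stirling2W n m x / n.factorial := by
  rw [one_sub_rescale_exp_pow_mul_rescale_exp, map_sum, stirling2W, mul_assoc _ (m.factorial : ℝ),
    ← mul_assoc (m.factorial : ℝ), mul_one_div_cancel (by positivity), one_mul, mul_sum, sum_div]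
  refine sum_congr rfl fun j hj => ?_
  have hsign := neg_one_pow_add_mul_neg_one_pow_sub n (Nat.lt_succ_iff.mp (mem_range.mp hj))
  rw [coeff_smul, coeff_rescale, coeff_exp, show (j : ℝ) * -1 + -x = -1 * (x + j) by ring, mul_pow]
  simp only [one_div, map_inv₀, map_natCast, smul_eq_mul]
  linear_combination (m.choose j * (x + j) ^ n / n.factorial : ℝ) * hsign.symm

theorem coeff_pqBernSeries (p q : ℝ) (k : ℤ) (n : ℕ) :
    coeff n (pqBernSeries p q k) = ∑ m ∈ range (n + 1),
      coeff n ((1 - rescale (-1) (exp ℝ)) ^ m) * (pqInt p q (m + 1) ^ k)⁻¹ := by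
  simp only [pqBernSeries, coeff_mk, div_eq_mul_inv]

theorem pqPolyBernoulli_eq_sum_weighted_stirling2
    (p q : ℝ) (k : ℤ)
    (B : ℝ → ℕ → ℝ)
    (hB : ∀ x : ℝ,
      pqBernSeries p q k * PowerSeries.rescale (-x) (PowerSeries.exp ℝ) = egf (B x)) :
    ∀ (n : ℕ), 1 ≤ n → ∀ x : ℝ,
      B x n =
        ∑ m ∈ Finset.range (n + 1),
          (-1 : ℝ) ^ (m + n) * (m.factorial : ℝ) * stirling2W n m x /
            pqInt p q (m + 1) ^ k := by
  intro n _ x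
  have hcoeff := congrArg (coeff n) (hB x)
  rw [coeff_mul_eq_sum_of_coeff_eq_sum_pow (constantCoeff_one_sub_rescale_exp (-1))
    (coeff_pqBernSeries p q k) n, egf, coeff_mk, eq_div_iff (by positivity)] at hcoeff
  rw [← hcoeff, sum_mul]
  refine sum_congr rfl fun m _ => ?_
  rw [coeff_one_sub_exp_neg_pow_mul_exp_neg, add_comm n m]
  field_simp
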